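/- Let σ < 0, 0 < δt < Δt ≤ ΔT, α > 0 and L ≥ 1. If μ* is a real negative root of the polynomial P that lies outside the open disc D_σ, then μ* > −(|δγ| + α·δβ·(1 + β))/(γ + α·(1 − β²)). -/

import Mathlib

open Finset in

/-- `β_τ = (1 - σ τ)^(-ΔT/τ)` (real exponent). -/
noncomputable def betaF (σ ΔT τ : ℝ) : ℝ := (1 - σ * τ) ^ (-(ΔT / τ))

/-- `γ_τ = (β_τ² - 1)/(σ (2 - σ τ))`. -/
noncomputable def gammaF (σ ΔT τ : ℝ) : ℝ := ((betaF σ ΔT τ) ^ 2 - 1) / (σ * (2 - σ * τ))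

/-- The polynomial `P(μ) = α μ^{2L-1} + (μγ - δγ) ∑_{ℓ=0}^{L-1} μ^{2(L-ℓ-1)} (μβ - δβ)^{2ℓ}`. -/
noncomputable def Ppoly (β δβ γ δγ α : ℝ) (L : ℕ) (μ : ℂ) : ℂ :=
  (α : ℂ) * μ ^ (2 * L - 1) +
    (μ * (γ : ℂ) - (δγ : ℂ)) *
      ∑ ℓ ∈ Finset.range L, μ ^ (2 * (L - ℓ - 1)) * (μ * (β : ℂ) - (δβ : ℂ)) ^ (2 * ℓ)

/-- The open disc `D_σ` with center `μ₀ = -β δβ/(1-β²)` and radius `δβ/(1-β²)`. -/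
noncomputable def Dsigma (β δβ : ℝ) : Set ℂ :=
  {μ : ℂ | ‖μ - ((-(β * δβ) / (1 - β ^ 2) : ℝ) : ℂ)‖ < δβ / (1 - β ^ 2)}

/-!
The exterior of `D_σ` meets the negative axis in `μ (1 - β) ≤ -δβ`, i.e. `μ ≤ ν := μβ - δβ < 0`; the
polynomial sum is the geometric sum `S = ∑ (μ²)^{L-1-ℓ} (ν²)^ℓ`, with
`S (μ² - ν²) = μ^{2L} - ν^{2L} < μ^{2L}`. The root equation `(μγ - δγ) S = α (-μ)^{2L-1}` makes
`μγ - δγ` positive, whence `α (-μ) (μ² - ν²) < (μγ - δγ) μ²`. Since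
`(-μ)(μ² - ν²) = (ν - μ)((1 + β) μ² + (-μ) δβ) ≥ (1 + β)(ν - μ) μ²`, this is linear in `μ` after
dividing by `μ²`, and rearranges to the bound.
-/

open Finset Set

lemma strictAntiOn_one_add_mul_rpow_inv {s : ℝ} (hs : 0 < s) :
    StrictAntiOn (fun t : ℝ => (1 + s * t) ^ t⁻¹) (Ioi 0) := by
  intro a (ha : 0 < a) b (hb : 0 < b) hab
  have bernoulli : 1 + s * b < (1 + s * a) ^ (b / a) := by
    have h := one_add_mul_self_lt_rpow_one_add (s := s * a) (by nlinarith) (by positivity)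
      ((one_lt_div ha).2 hab)
    rwa [show b / a * (s * a) = s * b by field_simp] at h
  calc (1 + s * b) ^ b⁻¹ < ((1 + s * a) ^ (b / a)) ^ b⁻¹ :=
        Real.rpow_lt_rpow (by positivity) bernoulli (inv_pos.2 hb)
    _ = (1 + s * a) ^ a⁻¹ := by
        rw [← Real.rpow_mul (by positivity)]
        congr 1
        field_simp

lemma betaF_eq_rpow {σ ΔT τ : ℝ} (hσ : σ < 0) (hτ : 0 < τ) :
    betaF σ ΔT τ = ((1 + -σ * τ) ^ τ⁻¹) ^ (-ΔT) := by
  rw [betaF, ← Real.rpow_mul (by nlinarith)]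
  ring_nf

lemma betaF_strictMonoOn {σ ΔT : ℝ} (hσ : σ < 0) (hΔT : 0 < ΔT) :
    StrictMonoOn (betaF σ ΔT) (Ioi 0) := by
  intro a (ha : 0 < a) b (hb : 0 < b) hab
  rw [betaF_eq_rpow hσ ha, betaF_eq_rpow hσ hb]
  have hs : 0 < -σ := neg_pos.2 hσ
  exact Real.rpow_lt_rpow_of_neg (by positivity)
    (strictAntiOn_one_add_mul_rpow_inv hs ha hb hab) (neg_neg_of_pos hΔT)

lemma betaF_pos {σ ΔT τ : ℝ} (hσ : σ < 0) (hτ : 0 < τ) : 0 < betaF σ ΔT τ :=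
  Real.rpow_pos_of_pos (by nlinarith) _

lemma betaF_lt_one {σ ΔT τ : ℝ} (hσ : σ < 0) (hτ : 0 < τ) (hΔT : 0 < ΔT) :
    betaF σ ΔT τ < 1 :=
  Real.rpow_lt_one_of_one_lt_of_neg (by nlinarith) (neg_neg_of_pos (div_pos hΔT hτ))

lemma gammaF_pos {σ ΔT τ : ℝ} (hσ : σ < 0) (hτ : 0 < τ) (hΔT : 0 < ΔT) :
    0 < gammaF σ ΔT τ := by
  have h₀ := betaF_pos (ΔT := ΔT) hσ hτ
  have h₁ := betaF_lt_one hσ hτ hΔT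
  exact div_pos_of_neg_of_neg (by nlinarith) (mul_neg_of_neg_of_pos hσ (by nlinarith))

lemma le_mul_sub_of_notMem_Dsigma {β δβ x : ℝ} (hβ₀ : -1 < β) (hβ₁ : β < 1)
    (hx : x < 0) (h : (x : ℂ) ∉ Dsigma β δβ) : x ≤ x * β - δβ := by
  have h1 : 0 < 1 - β ^ 2 := by nlinarith
  simp only [Dsigma, Set.mem_ofPred_eq, not_lt, ← Complex.ofReal_sub, Complex.norm_real,
    Real.norm_eq_abs] at h
  have hc : x - -(β * δβ) / (1 - β ^ 2) = (x * (1 - β ^ 2) + β * δβ) / (1 - β ^ 2) := by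
    field_simp
    ring
  rw [hc, abs_div, abs_of_pos h1, div_le_div_iff_of_pos_right h1] at h
  rcases le_abs.1 h with h | h <;> nlinarith

lemma Ppoly_ofReal (β δβ γ δγ α : ℝ) (L : ℕ) (x : ℝ) :
    Ppoly β δβ γ δγ α L x = ↑(α * x ^ (2 * L - 1) + (x * γ - δγ) *
      ∑ ℓ ∈ range L, x ^ (2 * (L - ℓ - 1)) * (x * β - δβ) ^ (2 * ℓ)) := by
  simp [Ppoly]

lemma sum_even_pow_eq_geom_sum₂ {R : Type*} [CommSemiring R] (x y : R) (n : ℕ) :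
    ∑ i ∈ range n, x ^ (2 * (n - i - 1)) * y ^ (2 * i) =
      ∑ i ∈ range n, (y ^ 2) ^ i * (x ^ 2) ^ (n - 1 - i) := by
  refine sum_congr rfl fun i _ => ?_
  rw [mul_comm, ← pow_mul, ← pow_mul, Nat.sub_right_comm]

lemma geom_sum₂_pos {R : Type*} [CommSemiring R] [PartialOrder R] [IsStrictOrderedRing R]
    {x y : R} (hx : 0 ≤ x) (hy : 0 < y) {n : ℕ} (hn : n ≠ 0) :
    0 < ∑ i ∈ range n, x ^ i * y ^ (n - 1 - i) :=
  sum_pos' (fun _ _ => mul_nonneg (pow_nonneg hx _) (pow_nonneg hy.le _))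
    ⟨0, mem_range.2 (Nat.pos_of_ne_zero hn), by simpa using pow_pos hy _⟩

lemma mul_neg_mul_sq_sub_sq_lt_of_eq_zero {α c μ ν : ℝ} {L : ℕ} (hα : 0 < α) (hμ : μ < 0)
    (hν : ν ≠ 0) (hL : L ≠ 0)
    (h : α * μ ^ (2 * L - 1) + c * ∑ ℓ ∈ range L, μ ^ (2 * (L - ℓ - 1)) * ν ^ (2 * ℓ) = 0) :
    α * -μ * (μ ^ 2 - ν ^ 2) < c * μ ^ 2 := by
  rw [sum_even_pow_eq_geom_sum₂] at h
  set S := ∑ i ∈ range L, (ν ^ 2) ^ i * (μ ^ 2) ^ (L - 1 - i)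
  have hμ2 : 0 < μ ^ 2 := sq_pos_of_neg hμ
  have hS : 0 < S := geom_sum₂_pos (sq_nonneg ν) hμ2 hL
  have hgeom : S * (ν ^ 2 - μ ^ 2) = (ν ^ 2) ^ L - (μ ^ 2) ^ L := geom_sum₂_mul _ _ _
  obtain ⟨K, rfl⟩ : ∃ K, L = K + 1 := ⟨L - 1, by omega⟩
  have hodd : μ ^ (2 * (K + 1) - 1) = μ * (μ ^ 2) ^ K := by
    rw [show 2 * (K + 1) - 1 = 2 * K + 1 by omega, pow_succ', pow_mul]
  have hcS : c * S = α * -μ * (μ ^ 2) ^ K := by linear_combination h - α * hodd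
  have hc : 0 < c :=
    pos_of_mul_pos_left (hcS ▸ mul_pos (mul_pos hα (neg_pos.2 hμ)) (pow_pos hμ2 K)) hS.le
  have hν2 : 0 < (ν ^ 2) ^ (K + 1) := pow_pos (sq_pos_of_ne_zero hν) _
  refine lt_of_mul_lt_mul_right ?_ (pow_nonneg hμ2.le K)
  calc α * -μ * (μ ^ 2 - ν ^ 2) * (μ ^ 2) ^ K = c * ((μ ^ 2) ^ (K + 1) - (ν ^ 2) ^ (K + 1)) := by
        linear_combination (μ ^ 2 - ν ^ 2) * hcS.symm - c * hgeom
    _ < c * (μ ^ 2) ^ (K + 1) := by nlinarith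
    _ = c * μ ^ 2 * (μ ^ 2) ^ K := by ring

lemma neg_div_lt_of_mul_neg_mul_sq_sub_sq_lt {α β γ δβ δγ μ : ℝ} (hα : 0 < α) (hδβ : 0 ≤ δβ)
    (hD : 0 < γ + α * (1 - β ^ 2)) (hμ : μ < 0) (hν : μ ≤ μ * β - δβ)
    (h : α * -μ * (μ ^ 2 - (μ * β - δβ) ^ 2) < (μ * γ - δγ) * μ ^ 2) :
    -((|δγ| + α * δβ * (1 + β)) / (γ + α * (1 - β ^ 2))) < μ := by
  set ν := μ * β - δβ
  have hμ2 : 0 < μ ^ 2 := sq_pos_of_neg hμ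
  -- `(-μ)(μ² - ν²) = (ν - μ)((1 + β) μ² + (-μ) δβ)`
  have hlin : α * (1 + β) * (ν - μ) < μ * γ - δγ := by
    refine lt_of_mul_lt_mul_right ?_ hμ2.le
    have : 0 ≤ α * (ν - μ) * (-μ * δβ) :=
      mul_nonneg (mul_nonneg hα.le (sub_nonneg.2 hν)) (mul_nonneg (neg_nonneg.2 hμ.le) hδβ)
    linear_combination h + this
  rw [← neg_div, div_lt_iff₀ hD]
  linarith [neg_le_abs δγ]

theorem isolated_eigenvalue_lower_bound (σ δt Δt ΔT α : ℝ) (L : ℕ) (hσ : σ < 0)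
    (hδt : 0 < δt) (hδtΔt : δt < Δt) (hΔtΔT : Δt ≤ ΔT) (hα : 0 < α) (hL : 1 ≤ L)
    (μstar : ℝ) (hneg : μstar < 0)
    (hroot : Ppoly (betaF σ ΔT Δt) (betaF σ ΔT Δt - betaF σ ΔT δt)
        (gammaF σ ΔT Δt) (gammaF σ ΔT Δt - gammaF σ ΔT δt) α L (μstar : ℂ) = 0)
    (hout : (μstar : ℂ) ∉ Dsigma (betaF σ ΔT Δt) (betaF σ ΔT Δt - betaF σ ΔT δt)) :
    μstar >
      -((|gammaF σ ΔT Δt - gammaF σ ΔT δt| +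
          α * (betaF σ ΔT Δt - betaF σ ΔT δt) * (1 + betaF σ ΔT Δt)) /
        (gammaF σ ΔT Δt + α * (1 - (betaF σ ΔT Δt) ^ 2))) := by
  have hΔt : 0 < Δt := hδt.trans hδtΔt
  have hΔT : 0 < ΔT := hΔt.trans_le hΔtΔT
  have hβ₀ := betaF_pos (ΔT := ΔT) hσ hΔt
  have hβ₁ := betaF_lt_one hσ hΔt hΔT
  have hδβ : 0 < betaF σ ΔT Δt - betaF σ ΔT δt :=
    sub_pos.2 (betaF_strictMonoOn hσ hΔT hδt hΔt hδtΔt)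
  have hγ := gammaF_pos hσ hΔt hΔT
  have hν := le_mul_sub_of_notMem_Dsigma (by linarith) hβ₁ hneg hout
  rw [Ppoly_ofReal, Complex.ofReal_eq_zero] at hroot
  have hkey := mul_neg_mul_sq_sub_sq_lt_of_eq_zero hα hneg (by nlinarith) (by omega) hroot
  exact neg_div_lt_of_mul_neg_mul_sq_sub_sq_lt hα hδβ.le
    (add_pos hγ (mul_pos hα (by nlinarith))) hneg hν hkey
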